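/- Let T be a pruned tree on a non-empty countable set A and let X be the set of infinite branches of T with its cylinder-set topology. A function f : X → ℝ is of Baire class 1 (i.e., a pointwise limit of a sequence of continuous functions X → ℝ) if and only if both f and −f are limsup functions. -/

import Mathlib

open Filter Topology

/-- The initial segment `(x₀, …, x_{n-1})` of an infinite sequence `x`. -/
def initSeg {β : Type*} (x : ℕ → β) (n : ℕ) : List β :=
  List.ofFn fun i : Fin n => x i

/-- `T` is a pruned tree on `A`: it contains the empty sequence, is closed under
prefixes, and every element has a proper extension in `T`. -/
def IsPrunedTree {A : Type*} (T : Set (List A)) : Prop :=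
  [] ∈ T ∧ (∀ s ∈ T, ∀ t : List A, t <+: s → t ∈ T) ∧ ∀ s ∈ T, ∃ a : A, s ++ [a] ∈ T

/-- The space `X` of infinite branches of the tree `T`, topologized as a subspace of
the product `ℕ → A` (with `A` discrete); this is exactly the cylinder-set topology. -/
abbrev Branches {A : Type*} (T : Set (List A)) : Type _ :=
  {x : ℕ → A // ∀ n : ℕ, initSeg x n ∈ T}

/-- The cylinder set `O(s)` of all branches with initial segment `s`. -/
def cyl {A : Type*} (T : Set (List A)) (s : List A) : Set (Branches T) :=
  {x | initSeg x.val s.length = s}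

/-- `f : X → ℝ` is a limsup function: there is `u` defined on finite sequences with
`f x = limsup_{t → ∞} u (x₀, …, x_t)` for every branch `x` (the limsup being computed
in the extended reals and required to equal the real number `f x`). -/
def IsLimsupFunction {A : Type*} {T : Set (List A)} (f : Branches T → ℝ) : Prop :=
  ∃ u : List A → ℝ, ∀ x : Branches T,
    (f x : EReal) = Filter.limsup (fun t : ℕ => (u (initSeg x.val (t + 1)) : EReal)) Filter.atTop

/-- `f` is of Baire class 1: a pointwise limit of continuous functions. -/
def BaireClassOne {X : Type*} [TopologicalSpace X] (f : X → ℝ) : Prop :=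
  ∃ g : ℕ → X → ℝ, (∀ n, Continuous (g n)) ∧
    ∀ x, Filter.Tendsto (fun n => g n x) Filter.atTop (nhds (f x))

/-- A Cantor set: a subset homeomorphic to the Cantor space `2^ℕ`. -/
def IsCantorSet {X : Type*} [TopologicalSpace X] (C : Set X) : Prop :=
  Nonempty (C ≃ₜ (ℕ → Bool))

/-- A Bernstein set: neither it nor its complement contains a nonempty perfect set. -/
def IsBernsteinSet {X : Type*} [TopologicalSpace X] (B : Set X) : Prop :=
  ∀ P : Set X, Perfect P → P.Nonempty → ¬ P ⊆ B ∧ ¬ P ⊆ Bᶜ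

/-- A co-analytic set: the complement of an analytic set. -/
def IsCoanalytic {X : Type*} [TopologicalSpace X] (s : Set X) : Prop :=
  MeasureTheory.AnalyticSet sᶜ

/-- The sequence of moves produced by Player I's strategy `σ` against the sequence `v`
of moves of Player II: Player I's `n`-th move depends on `(v₀, …, v_{n-1})`. -/
def playI {A M : Type*} (σ : List M → A) (v : ℕ → M) : ℕ → A :=
  fun n => σ (initSeg v n)

/-- Player II has a winning strategy in the game `Γ(f)`: a strategy for Player II assigns
to each position `(x₀, …, x_t)` of moves of Player I a real number `v_t` (Player II's own
previous moves being determined), and it is winning if for every run, i.e. every branch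
`x` that Player I may produce, `f x = limsup_{t → ∞} v_t`. -/
def PlayerIIWinsGamma {A : Type*} {T : Set (List A)} (f : Branches T → ℝ) : Prop :=
  ∃ τ : List A → ℝ, ∀ x : Branches T,
    (f x : EReal) = Filter.limsup (fun t : ℕ => (τ (initSeg x.val (t + 1)) : EReal)) Filter.atTop

/-- Player I has a winning strategy in the game `Γ_R(f)` where Player II's moves are
restricted to `R`: a strategy for Player I assigns to each position `(v₀, …, v_{n-1})` of
moves of Player II a point of `A`, and it is winning if against every sequence of moves
of Player II in `R` the moves of Player I are legal (all initial segments lie in `T`) and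
the resulting branch `x` satisfies `f x ≠ limsup_{t → ∞} v_t`. -/
def PlayerIWinsGammaR {A : Type*} {T : Set (List A)} (R : Set ℝ) (f : Branches T → ℝ) :
    Prop :=
  ∃ σ : List ℝ → A, ∀ v : ℕ → ℝ, (∀ t, v t ∈ R) →
    ∃ h : ∀ n : ℕ, initSeg (playI σ v) n ∈ T,
      (f ⟨playI σ v, h⟩ : EReal) ≠ Filter.limsup (fun t : ℕ => (v t : EReal)) Filter.atTop

/-- Player I has a winning strategy in the game `Γ(f)`. -/
def PlayerIWinsGamma {A : Type*} {T : Set (List A)} (f : Branches T → ℝ) : Prop :=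
  ∃ σ : List ℝ → A, ∀ v : ℕ → ℝ,
    ∃ h : ∀ n : ℕ, initSeg (playI σ v) n ∈ T,
      (f ⟨playI σ v, h⟩ : EReal) ≠ Filter.limsup (fun t : ℕ => (v t : EReal)) Filter.atTop

/-- Player II has a winning strategy in the game `Γ'(f)`, in which Player II's moves are
pairs `(v_t, w_t)` of reals and Player II wins a run iff
`f x = limsup_{t → ∞} v_t = liminf_{t → ∞} w_t`. -/
def PlayerIIWinsGamma' {A : Type*} {T : Set (List A)} (f : Branches T → ℝ) : Prop :=
  ∃ τ : List A → ℝ × ℝ, ∀ x : Branches T,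
    (f x : EReal) =
      Filter.limsup (fun t : ℕ => ((τ (initSeg x.val (t + 1))).1 : EReal)) Filter.atTop ∧
    (f x : EReal) =
      Filter.liminf (fun t : ℕ => ((τ (initSeg x.val (t + 1))).2 : EReal)) Filter.atTop

/-- Player I has a winning strategy in the game `Γ'(f)`. -/
def PlayerIWinsGamma' {A : Type*} {T : Set (List A)} (f : Branches T → ℝ) : Prop :=
  ∃ σ : List (ℝ × ℝ) → A, ∀ v : ℕ → ℝ × ℝ,
    ∃ h : ∀ n : ℕ, initSeg (playI σ v) n ∈ T,
      ¬ ((f ⟨playI σ v, h⟩ : EReal) =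
            Filter.limsup (fun t : ℕ => ((v t).1 : EReal)) Filter.atTop ∧
         (f ⟨playI σ v, h⟩ : EReal) =
            Filter.liminf (fun t : ℕ => ((v t).2 : EReal)) Filter.atTop)

/-! Given continuous `gₙ → f`, attach to a node `s` the value of `g_m` at some branch through `s`,
where `m ≤ |s|` is the largest index for which `g_m` oscillates by at most `1 / (m + 1)` on the
cylinder `O(s)`. Continuity of each `g_m` forces `m → ∞` along every branch, so these values even
converge to `f x`, and their negatives to `-f x`.

Conversely, let `f x = limsup aₜ` and `-f x = limsup a'ₜ` along a branch `x`. Stop at the first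
window `[n, n + j]` on which `max a + max a' ≥ -1 / (n + 1)`, which exists because the two maxima
come arbitrarily close to `f x` and `-f x`, and let `gₙ x` be the maximum of `a` on that window.
It depends on finitely many coordinates of `x`, so it is continuous; it is eventually below
`f x + ε` because `a` is, and it is at least `-max a' - 1 / (n + 1)`, eventually above `f x - ε`. -/

section WindowSup

variable {a a' b b' : ℕ → ℝ} {c : ℝ}

theorem partialSups_congr {α : Type*} [SemilatticeSup α] {f g : ℕ → α} {j : ℕ}
    (h : ∀ i ≤ j, f i = g i) : partialSups f j = partialSups g j := by
  simp only [partialSups_apply]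
  exact Finset.sup'_congr _ rfl fun i hi => h i (Finset.mem_Iic.1 hi)

theorem le_partialSups_add {n k j : ℕ} (hnk : n ≤ k) (hkj : k ≤ n + j) :
    a k ≤ partialSups (fun i => a (n + i)) j := by
  simpa [Nat.add_sub_cancel' hnk] using
    le_partialSups_of_le (fun i => a (n + i)) (show k - n ≤ j by omega)

theorem eventually_partialSups_add_lt {B : ℝ} (h : ∀ᶠ k in atTop, a k < B) :
    ∀ᶠ n in atTop, ∀ j, partialSups (fun i => a (n + i)) j < B := by
  filter_upwards [eventually_forall_ge_atTop.2 h] with n hn j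
  obtain ⟨i, -, hi⟩ := exists_partialSups_eq (fun i => a (n + i)) j
  exact hi ▸ hn _ (Nat.le_add_right n i)

theorem eventually_lt_of_coe_eq_limsup
    (h : (c : EReal) = limsup (fun t => (a t : EReal)) atTop) {B : ℝ} (hB : c < B) :
    ∀ᶠ t in atTop, a t < B := by
  refine (eventually_lt_of_limsup_lt ?_).mono fun t ht => EReal.coe_lt_coe_iff.1 ht
  exact h ▸ EReal.coe_lt_coe_iff.2 hB

theorem frequently_lt_of_coe_eq_limsup
    (h : (c : EReal) = limsup (fun t => (a t : EReal)) atTop) {B : ℝ} (hB : B < c) :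
    ∃ᶠ t in atTop, B < a t := by
  refine (frequently_lt_of_lt_limsup (by isBoundedDefault) ?_).mono
    fun t ht => EReal.coe_lt_coe_iff.1 ht
  exact h ▸ EReal.coe_lt_coe_iff.2 hB

variable (a a') in
/-- On the window `[n, n + j]`, the maximum of `a` is at least the minimum of `-a'`,
up to `1 / (n + 1)`. -/
def SupsBalanced (n j : ℕ) : Prop :=
  0 ≤ partialSups (fun i => a (n + i)) j + partialSups (fun i => a' (n + i)) j + 1 / ((n : ℝ) + 1)

open Classical in
variable (a a') in
noncomputable def balanceIdx (n : ℕ) : ℕ :=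
  if h : ∃ j, SupsBalanced a a' n j then Nat.find h else 0

variable (a a') in
noncomputable def balancedSup (n : ℕ) : ℝ :=
  partialSups (fun i => a (n + i)) (balanceIdx a a' n)

theorem balanceIdx_eq_iff {n m : ℕ} (h : ∃ j, SupsBalanced a a' n j) :
    balanceIdx a a' n = m ↔ SupsBalanced a a' n m ∧ ∀ j < m, ¬ SupsBalanced a a' n j := by
  classical
  rw [balanceIdx, dif_pos h]
  exact Nat.find_eq_iff h

theorem supsBalanced_congr {n j : ℕ} (hb : ∀ k ≤ n + j, b k = a k)
    (hb' : ∀ k ≤ n + j, b' k = a' k) :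
    SupsBalanced b b' n j ↔ SupsBalanced a a' n j := by
  rw [SupsBalanced, SupsBalanced, partialSups_congr fun i hi => hb (n + i) (by omega),
    partialSups_congr fun i hi => hb' (n + i) (by omega)]

theorem balancedSup_congr {n : ℕ} (h : ∃ j, SupsBalanced a a' n j)
    (hb : ∀ k ≤ n + balanceIdx a a' n, b k = a k) (hb' : ∀ k ≤ n + balanceIdx a a' n, b' k = a' k) :
    balancedSup b b' n = balancedSup a a' n := by
  set J := balanceIdx a a' n
  have hagree : ∀ j ≤ J, SupsBalanced b b' n j ↔ SupsBalanced a a' n j := fun j hj =>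
    supsBalanced_congr (fun k hk => hb k (by omega)) (fun k hk => hb' k (by omega))
  obtain ⟨hJ, hJmin⟩ := (balanceIdx_eq_iff h).1 rfl
  have hidx : balanceIdx b b' n = J :=
    (balanceIdx_eq_iff ⟨J, (hagree J le_rfl).2 hJ⟩).2
      ⟨(hagree J le_rfl).2 hJ, fun j hj => (hagree j hj.le).not.2 (hJmin j hj)⟩
  rw [balancedSup, balancedSup, hidx]
  exact partialSups_congr fun i hi => hb (n + i) (by omega)

theorem exists_supsBalanced (ha : (c : EReal) = limsup (fun t => (a t : EReal)) atTop)
    (ha' : ((-c : ℝ) : EReal) = limsup (fun t => (a' t : EReal)) atTop) (n : ℕ) :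
    ∃ j, SupsBalanced a a' n j := by
  set δ : ℝ := 1 / (2 * ((n : ℝ) + 1))
  have hδ : 0 < δ := by positivity
  obtain ⟨k, hnk, hk⟩ := frequently_atTop.1 (frequently_lt_of_coe_eq_limsup ha (sub_lt_self c hδ)) n
  obtain ⟨k', hnk', hk'⟩ :=
    frequently_atTop.1 (frequently_lt_of_coe_eq_limsup ha' (sub_lt_self (-c) hδ)) n
  refine ⟨max k k' - n, ?_⟩
  have hsup := le_partialSups_add (a := a) hnk (show k ≤ n + (max k k' - n) by omega)
  have hsup' := le_partialSups_add (a := a') hnk' (show k' ≤ n + (max k k' - n) by omega)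
  have h2δ : 2 * δ = 1 / ((n : ℝ) + 1) := by
    simp only [δ]
    field_simp
  rw [SupsBalanced]
  linarith

theorem tendsto_balancedSup (ha : (c : EReal) = limsup (fun t => (a t : EReal)) atTop)
    (ha' : ((-c : ℝ) : EReal) = limsup (fun t => (a' t : EReal)) atTop) :
    Tendsto (balancedSup a a') atTop (𝓝 c) := by
  refine tendsto_order.2 ⟨fun B hB => ?_, fun B hB =>
    (eventually_partialSups_add_lt (eventually_lt_of_coe_eq_limsup ha hB)).mono
      fun n hn => hn _⟩
  set δ := (c - B) / 2
  have hδ : 0 < δ := by simp only [δ]; linarith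
  filter_upwards [eventually_partialSups_add_lt (eventually_lt_of_coe_eq_limsup ha'
      (lt_add_of_pos_right (-c) hδ)),
    (tendsto_one_div_add_atTop_nhds_zero_nat (𝕜 := ℝ)).eventually (gt_mem_nhds hδ)] with n hn hsmall
  have hbal := ((balanceIdx_eq_iff (exists_supsBalanced ha ha' n)).1 rfl).1
  rw [SupsBalanced] at hbal
  have hsup' := hn (balanceIdx a a' n)
  rw [balancedSup]
  simp only [δ] at hsup' hsmall
  linarith

end WindowSup

def pathValues {A : Type*} (u : List A → ℝ) (x : ℕ → A) (t : ℕ) : ℝ :=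
  u (initSeg x (t + 1))

theorem PiNat.nhds_hasAntitoneBasis_cylinder {E : ℕ → Type*} [∀ n, TopologicalSpace (E n)]
    [∀ n, DiscreteTopology (E n)] (x : ∀ n, E n) :
    (𝓝 x).HasAntitoneBasis (PiNat.cylinder x) := by
  refine ⟨⟨fun U => ⟨fun hU => ?_, fun ⟨n, _, hn⟩ => ?_⟩⟩, fun m n h => PiNat.cylinder_anti x h⟩
  · obtain ⟨-, ⟨z, n, rfl⟩, hxz, hU⟩ :=
      (PiNat.isTopologicalBasis_cylinders E).mem_nhds_iff.1 hU
    exact ⟨n, trivial, PiNat.mem_cylinder_iff_eq.1 hxz ▸ hU⟩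
  · exact Filter.mem_of_superset ((PiNat.isOpen_cylinder _ x n).mem_nhds
      (PiNat.self_mem_cylinder x n)) hn

section Branches

variable {A : Type*} {T : Set (List A)}

theorem initSeg_length {β : Type*} (x : ℕ → β) (n : ℕ) : (initSeg x n).length = n := by
  simp [initSeg]

theorem initSeg_eq_iff {β : Type*} {x y : ℕ → β} {n : ℕ} :
    initSeg x n = initSeg y n ↔ ∀ i < n, x i = y i := by
  rw [initSeg, initSeg, List.ofFn_inj, funext_iff]
  exact ⟨fun h i hi => h ⟨i, hi⟩, fun h i => h i i.2⟩

theorem mem_cyl_initSeg {x y : Branches T} {n : ℕ} :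
    y ∈ cyl T (initSeg x.val n) ↔ ∀ i < n, y.val i = x.val i := by
  simp [cyl, initSeg_length, initSeg_eq_iff]

theorem self_mem_cyl_initSeg (x : Branches T) (n : ℕ) : x ∈ cyl T (initSeg x.val n) :=
  mem_cyl_initSeg.2 fun _ _ => rfl

def CylOscLE (g : ℕ → Branches T → ℝ) (s : List A) (n : ℕ) : Prop :=
  ∀ y ∈ cyl T s, ∀ z ∈ cyl T s, dist (g n y) (g n z) ≤ 1 / ((n : ℝ) + 1)

open Classical in
noncomputable def oscIndex (g : ℕ → Branches T → ℝ) (s : List A) : ℕ :=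
  Nat.findGreatest (CylOscLE g s) s.length

open Classical in
noncomputable def cylApprox (g : ℕ → Branches T → ℝ) (s : List A) : ℝ :=
  if h : (cyl T s).Nonempty then g (oscIndex g s) h.some else 0

theorem oscIndex_spec {g : ℕ → Branches T → ℝ} {s : List A} {n : ℕ} (h : CylOscLE g s n)
    (hn : n ≤ s.length) : n ≤ oscIndex g s ∧ CylOscLE g s (oscIndex g s) := by
  classical
  exact ⟨Nat.le_findGreatest hn h, Nat.findGreatest_spec hn h⟩

theorem dist_cylApprox_le {g : ℕ → Branches T → ℝ} {s : List A} {x : Branches T}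
    (hx : x ∈ cyl T s) (h : CylOscLE g s (oscIndex g s)) :
    dist (cylApprox g s) (g (oscIndex g s) x) ≤ 1 / ((oscIndex g s : ℝ) + 1) := by
  rw [cylApprox, dif_pos ⟨x, hx⟩]
  exact h _ (Set.Nonempty.some_mem _) _ hx

theorem isLimsupFunction_of_tendsto {f : Branches T → ℝ} {u : List A → ℝ}
    (h : ∀ x : Branches T, Tendsto (pathValues u x.val) atTop (𝓝 (f x))) : IsLimsupFunction f :=
  ⟨u, fun x => (EReal.tendsto_coe.2 (h x)).limsup_eq.symm⟩

theorem pathValues_eq_of_mem_cyl {u : List A → ℝ} {x y : Branches T} {n k : ℕ}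
    (hy : y ∈ cyl T (initSeg x.val n)) (hk : k < n) :
    pathValues u y.val k = pathValues u x.val k := by
  rw [pathValues, pathValues, initSeg_eq_iff.2 fun i hi => mem_cyl_initSeg.1 hy i (by omega)]

variable [TopologicalSpace A] [DiscreteTopology A]

theorem nhds_hasAntitoneBasis_cyl (x : Branches T) :
    (𝓝 x).HasAntitoneBasis fun n => cyl T (initSeg x.val n) := by
  have hcyl : (fun n => cyl T (initSeg x.val n)) =
      fun n => Subtype.val ⁻¹' PiNat.cylinder x.val n := by
    ext n y
    exact mem_cyl_initSeg
  rw [hcyl, nhds_induced]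
  exact (PiNat.nhds_hasAntitoneBasis_cylinder x.val).comap _

theorem continuous_of_forall_exists_cyl {β : Type*} [TopologicalSpace β] {F : Branches T → β}
    (h : ∀ x, ∃ n, ∀ y ∈ cyl T (initSeg x.val n), F y = F x) : Continuous F := by
  refine continuous_iff_continuousAt.2 fun x => ?_
  obtain ⟨n, hn⟩ := h x
  exact EventuallyEq.continuousAt (Filter.mem_of_superset ((nhds_hasAntitoneBasis_cyl x).mem n) hn)

theorem eventually_cylOscLE {g : ℕ → Branches T → ℝ} {n : ℕ} (hg : Continuous (g n))
    (x : Branches T) : ∀ᶠ t in atTop, CylOscLE g (initSeg x.val t) n := by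
  set r : ℝ := 1 / ((n : ℝ) + 1)
  have hU : g n ⁻¹' Metric.ball (g n x) (r / 2) ∈ 𝓝 x :=
    hg.continuousAt (Metric.ball_mem_nhds _ (by positivity))
  filter_upwards [(nhds_hasAntitoneBasis_cyl x).eventually_subset hU] with t ht y hy z hz
  calc dist (g n y) (g n z) ≤ dist (g n y) (g n x) + dist (g n z) (g n x) := dist_triangle_right ..
    _ ≤ r / 2 + r / 2 := add_le_add (ht hy).le (ht hz).le
    _ = r := add_halves r

theorem eventually_le_oscIndex {g : ℕ → Branches T → ℝ} (hg : ∀ n, Continuous (g n))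
    (x : Branches T) (n : ℕ) :
    ∀ᶠ t in atTop, n ≤ oscIndex g (initSeg x.val t) ∧
      CylOscLE g (initSeg x.val t) (oscIndex g (initSeg x.val t)) := by
  filter_upwards [eventually_cylOscLE (hg n) x, eventually_ge_atTop n] with t h ht
  exact oscIndex_spec h ((initSeg_length _ t).symm ▸ ht)

theorem tendsto_cylApprox {f : Branches T → ℝ} {g : ℕ → Branches T → ℝ}
    (hg : ∀ n, Continuous (g n)) (hgf : ∀ x, Tendsto (fun n => g n x) atTop (𝓝 (f x)))
    (x : Branches T) : Tendsto (fun t => cylApprox g (initSeg x.val t)) atTop (𝓝 (f x)) := by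
  set m := fun t => oscIndex g (initSeg x.val t)
  have hm : Tendsto m atTop atTop :=
    tendsto_atTop.2 fun n => (eventually_le_oscIndex hg x n).mono fun _ h => h.1
  refine ((hgf x).comp hm).congr_dist (squeeze_zero' (Eventually.of_forall fun _ => dist_nonneg) ?_
    (tendsto_one_div_add_atTop_nhds_zero_nat.comp hm))
  filter_upwards [eventually_le_oscIndex hg x 0] with t ht
  rw [dist_comm]
  exact dist_cylApprox_le (self_mem_cyl_initSeg x t) ht.2

theorem exists_tendsto_pathValues {f : Branches T → ℝ} (hf : BaireClassOne f) :
    ∃ u : List A → ℝ, ∀ x : Branches T, Tendsto (pathValues u x.val) atTop (𝓝 (f x)) := by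
  obtain ⟨g, hg, hgf⟩ := hf
  exact ⟨cylApprox g, fun x => (tendsto_cylApprox hg hgf x).comp (tendsto_add_atTop_nat 1)⟩

theorem continuous_balancedSup {u u' : List A → ℝ}
    (h : ∀ (x : Branches T) n, ∃ j, SupsBalanced (pathValues u x.val) (pathValues u' x.val) n j)
    (n : ℕ) :
    Continuous fun x : Branches T => balancedSup (pathValues u x.val) (pathValues u' x.val) n :=
  continuous_of_forall_exists_cyl fun x =>
    ⟨n + balanceIdx (pathValues u x.val) (pathValues u' x.val) n + 1, fun y hy =>
      balancedSup_congr (h x n) (fun k hk => pathValues_eq_of_mem_cyl hy (by omega))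
        (fun k hk => pathValues_eq_of_mem_cyl hy (by omega))⟩

theorem baireClassOne_of_isLimsupFunction {f : Branches T → ℝ} (hf : IsLimsupFunction f)
    (hf' : IsLimsupFunction fun x => -f x) : BaireClassOne f := by
  obtain ⟨u, hu⟩ := hf
  obtain ⟨u', hu'⟩ := hf'
  exact ⟨fun n x => balancedSup (pathValues u x.val) (pathValues u' x.val) n,
    continuous_balancedSup fun x => exists_supsBalanced (hu x) (hu' x),
    fun x => tendsto_balancedSup (hu x) (hu' x)⟩

end Branches

theorem baireClassOne_iff_limsupFunction_general
    {A : Type*} [TopologicalSpace A] [DiscreteTopology A]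
    {T : Set (List A)} (f : Branches T → ℝ) :
    BaireClassOne f ↔ IsLimsupFunction f ∧ IsLimsupFunction (fun x => -f x) := by
  refine ⟨fun hf => ?_, fun h => baireClassOne_of_isLimsupFunction h.1 h.2⟩
  obtain ⟨u, hu⟩ := exists_tendsto_pathValues hf
  exact ⟨isLimsupFunction_of_tendsto hu,
    isLimsupFunction_of_tendsto (u := fun s => -u s) fun x => (hu x).neg⟩

/-- A function `f` is of Baire class 1 if and only if both `f` and `-f` are limsup
functions. -/
theorem baireClassOne_iff_limsupFunction
    {A : Type*} [Countable A] [Nonempty A] [TopologicalSpace A] [DiscreteTopology A]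
    {T : Set (List A)} (hT : IsPrunedTree T) (f : Branches T → ℝ) :
    BaireClassOne f ↔ IsLimsupFunction f ∧ IsLimsupFunction (fun x => -f x) :=
  baireClassOne_iff_limsupFunction_general f
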